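/- arXiv:1602.00579 — 3 statements merged into one kernel-verified Lean document; each statement's English description precedes it below -/
import Mathlib

section
/- Let ε ∈ [0,1] and let (X_n)_{n≥0} be a stochastic process with values in A = {0,1,2} compatible with (τ_ter, p_ter). Then for every n ≥ 1 with P(X_n = 2) > 0: P(X_{n+1} = 2 | X_n = 2) = 0, P(X_{n+2} = 2 | X_n = 2) = 0, and P(X_{n+3} = 2 | X_n = 2) = 1. -/
open MeasureTheory

/-- The ternary context tree τ_ter = {00, 10, 20, 01, 11, 21, 2}, where the string
"01" denotes the list [0, 1]. -/
def tauTer : Finset (List (Fin 3)) :=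
  {[0,0], [1,0], [2,0], [0,1], [1,1], [2,1], [2]}

/-- The family of transition probabilities p_ter of the Ternary chain:
p(0|w) = ε, p(1|w) = 1 − ε, p(2|w) = 0 for w ∈ {2, 21, 20};
p(2|w) = 1, p(0|w) = p(1|w) = 0 for w ∈ {11, 10, 01, 00}. -/
noncomputable def pTer (ε : ℝ) (w : List (Fin 3)) (a : Fin 3) : ℝ :=
  if w = [2] ∨ w = [2,1] ∨ w = [2,0] then
    if a = 0 then ε else if a = 1 then 1 - ε else 0
  else if w = [1,1] ∨ w = [1,0] ∨ w = [0,1] ∨ w = [0,0] then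
    if a = 2 then 1 else 0
  else 0

/-- A stochastic process (X_n) with values in {0,1,2} is compatible with
(τ_ter, p_ter): for every n ≥ 2 and every string x_0⋯x_{n-1} with
P(X_0 = x_0, …, X_{n-1} = x_{n-1}) > 0, one has
P(X_n = a | X_0 = x_0, …, X_{n-1} = x_{n-1}) = p_ter(a | c(x_0⋯x_{n-1})) for all a,
where c is the (unique) context function of τ_ter. -/
def CompatibleTer {Ω : Type*} [MeasurableSpace Ω] (μ : Measure Ω)
    (X : ℕ → Ω → Fin 3) (ε : ℝ) (c : List (Fin 3) → List (Fin 3)) : Prop :=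
  ∀ n : ℕ, 2 ≤ n → ∀ x : ℕ → Fin 3,
    0 < μ {ω | ∀ i < n, X i ω = x i} →
    ∀ a : Fin 3,
      μ ({ω | X n ω = a} ∩ {ω | ∀ i < n, X i ω = x i}) =
        ENNReal.ofReal (pTer ε (c ((List.range n).map x)) a) *
          μ {ω | ∀ i < n, X i ω = x i}


section Aux

lemma suffix_two_aux {t : List (Fin 3)} {a b : Fin 3} {L : List (Fin 3)}
    (hL : L ∈ tauTer) (hs : L <:+ t ++ [a, b]) :
    (L = [2] ∧ b = 2) ∨ L = [a, b] := by
  fin_cases hL <;>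
    (obtain ⟨u, hu⟩ := hs; have h2 := congrArg List.reverse hu;
     simp at h2 ⊢ <;> tauto)

lemma suffix_one_aux {t : List (Fin 3)} {L : List (Fin 3)}
    (hL : L ∈ tauTer) (hs : L <:+ t ++ [2]) :
    L = [2] := by
  fin_cases hL <;>
    (obtain ⟨u, hu⟩ := hs; have h2 := congrArg List.reverse hu;
     simp at h2 ⊢) <;> tauto

lemma pTer_pair_aux (ε : ℝ) (a b : Fin 3) :
    pTer ε [a, b] 2 = if a = 2 ∨ b = 2 then 0 else 1 := by
  fin_cases a <;> fin_cases b <;> norm_num [pTer, Fin.ext_iff]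

lemma pTer_single2_aux (ε : ℝ) : pTer ε [2] 2 = 0 := by
  norm_num [pTer, Fin.ext_iff]

lemma ctx_two_aux (ε : ℝ) (c : List (Fin 3) → List (Fin 3))
    (hc : ∀ v : List (Fin 3), 2 ≤ v.length → c v ∈ tauTer ∧ c v <:+ v)
    (t : List (Fin 3)) (a b : Fin 3) :
    pTer ε (c (t ++ [a, b])) 2 = if a = 2 ∨ b = 2 then 0 else 1 := by
  obtain ⟨hmem, hsuf⟩ := hc (t ++ [a, b]) (by simp)
  rcases suffix_two_aux hmem hsuf with ⟨h1, h2⟩ | h1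
  · rw [h1, pTer_single2_aux]
    simp [h2]
  · rw [h1, pTer_pair_aux]

lemma ctx_one_aux (ε : ℝ) (c : List (Fin 3) → List (Fin 3))
    (hc : ∀ v : List (Fin 3), 2 ≤ v.length → c v ∈ tauTer ∧ c v <:+ v)
    (t : List (Fin 3)) (ht : 1 ≤ t.length) :
    pTer ε (c (t ++ [2])) 2 = 0 := by
  obtain ⟨hmem, hsuf⟩ := hc (t ++ [2]) (by simp; omega)
  rw [suffix_one_aux hmem hsuf, pTer_single2_aux]

/-- Extension of a function on `Fin m` to `ℕ` by `0`. -/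
def extF (m : ℕ) (y : Fin m → Fin 3) (i : ℕ) : Fin 3 :=
  if h : i < m then y ⟨i, h⟩ else 0

lemma cyl_measurable {Ω : Type*} [MeasurableSpace Ω] (X : ℕ → Ω → Fin 3)
    (hX : ∀ n, Measurable (X n)) (x : ℕ → Fin 3) (m : ℕ) :
    MeasurableSet {ω | ∀ i < m, X i ω = x i} := by
  have h : {ω | ∀ i < m, X i ω = x i} = ⋂ i ∈ Set.Iio m, X i ⁻¹' {x i} := by
    ext ω; simp [Set.mem_iInter]
  rw [h]
  exact MeasurableSet.biInter (Set.to_countable _)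
    fun i _ => (hX i) (measurableSet_singleton _)

lemma cylDecomp {Ω : Type*} [MeasurableSpace Ω] (μ : MeasureTheory.Measure Ω)
    (X : ℕ → Ω → Fin 3) (hX : ∀ n, Measurable (X n))
    (S : Set Ω) (hS : MeasurableSet S) (m : ℕ) :
    μ S = ∑ y : Fin m → Fin 3, μ (S ∩ {ω | ∀ i < m, X i ω = extF m y i}) := by
  have hU : S = ⋃ y : Fin m → Fin 3, S ∩ {ω | ∀ i < m, X i ω = extF m y i} := by
    ext ω
    simp only [Set.mem_iUnion, Set.mem_inter_iff, Set.mem_setOf_eq]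
    constructor
    · intro hω
      exact ⟨fun i => X i ω, hω, fun i hi => by simp [extF, hi]⟩
    · rintro ⟨y, hy, -⟩; exact hy
  have hdisj : Pairwise (Function.onFun Disjoint fun y : Fin m → Fin 3 =>
      S ∩ {ω | ∀ i < m, X i ω = extF m y i}) := by
    intro y z hyz
    refine Set.disjoint_left.2 ?_
    rintro ω ⟨-, hy⟩ ⟨-, hz⟩
    apply hyz
    funext i
    have h := (hy i i.isLt).symm.trans (hz i i.isLt)
    simpa [extF, i.isLt] using h
  calc μ S = μ (⋃ y : Fin m → Fin 3, S ∩ {ω | ∀ i < m, X i ω = extF m y i}) := by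
        rw [← hU]
    _ = ∑' y : Fin m → Fin 3, μ (S ∩ {ω | ∀ i < m, X i ω = extF m y i}) :=
        MeasureTheory.measure_iUnion hdisj
          fun y => hS.inter (cyl_measurable X hX _ m)
    _ = ∑ y : Fin m → Fin 3, μ (S ∩ {ω | ∀ i < m, X i ω = extF m y i}) :=
        tsum_fintype _

lemma range_map_succ (x : ℕ → Fin 3) (k : ℕ) :
    (List.range (k+1)).map x = (List.range k).map x ++ [x k] := by
  simp [List.range_succ]

lemma range_map_succ2 (x : ℕ → Fin 3) (k : ℕ) :
    (List.range (k+2)).map x = (List.range k).map x ++ [x k, x (k+1)] := by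
  rw [range_map_succ, range_map_succ]
  simp

end Aux

/-- for ε ∈ [0,1] and (X_n) compatible with (τ_ter, p_ter), for every
n ≥ 1 with P(X_n = 2) > 0: P(X_{n+1} = 2 | X_n = 2) = 0, P(X_{n+2} = 2 | X_n = 2) = 0
and P(X_{n+3} = 2 | X_n = 2) = 1. -/
theorem stmt5 {Ω : Type*} [MeasurableSpace Ω] (μ : Measure Ω) [IsProbabilityMeasure μ]
    (X : ℕ → Ω → Fin 3) (hX : ∀ n, Measurable (X n))
    (ε : ℝ) (hε0 : 0 ≤ ε) (hε1 : ε ≤ 1)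
    (c : List (Fin 3) → List (Fin 3))
    (hc : ∀ v : List (Fin 3), 2 ≤ v.length → c v ∈ tauTer ∧ c v <:+ v)
    (hcompat : CompatibleTer μ X ε c)
    (n : ℕ) (hn : 1 ≤ n) (hpos : 0 < μ {ω | X n ω = 2}) :
    μ ({ω | X (n+1) ω = 2} ∩ {ω | X n ω = 2}) = 0 ∧
    μ ({ω | X (n+2) ω = 2} ∩ {ω | X n ω = 2}) = 0 ∧
    μ ({ω | X (n+3) ω = 2} ∩ {ω | X n ω = 2}) = μ {ω | X n ω = 2} := by
  classical
  have hmeasX : ∀ k : ℕ, MeasurableSet {ω | X k ω = 2} := fun k =>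
    (hX k) (measurableSet_singleton 2)
  -- Part 1
  have h1 : μ ({ω | X (n+1) ω = 2} ∩ {ω | X n ω = 2}) = 0 := by
    rw [cylDecomp μ X hX _ ((hmeasX (n+1)).inter (hmeasX n)) (n+1)]
    apply Finset.sum_eq_zero
    intro y _
    set x : ℕ → Fin 3 := extF (n+1) y with hxdef
    by_cases hy : x n = 2
    · have hsub : {ω | ∀ i < n+1, X i ω = x i} ⊆ {ω | X n ω = 2} := by
        intro ω hω
        exact (hω n (by omega)).trans hy
      have heq : ({ω | X (n+1) ω = 2} ∩ {ω | X n ω = 2}) ∩ {ω | ∀ i < n+1, X i ω = x i}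
          = {ω | X (n+1) ω = 2} ∩ {ω | ∀ i < n+1, X i ω = x i} := by
        ext ω
        constructor
        · rintro ⟨⟨h1, -⟩, h2⟩; exact ⟨h1, h2⟩
        · rintro ⟨h1, h2⟩; exact ⟨⟨h1, hsub h2⟩, h2⟩
      rw [heq]
      rcases eq_or_ne (μ {ω | ∀ i < n+1, X i ω = x i}) 0 with h0 | h0
      · exact measure_mono_null Set.inter_subset_right h0
      · rw [hcompat (n+1) (by omega) x (pos_iff_ne_zero.mpr h0) 2]
        have hv : (List.range (n+1)).map x = (List.range n).map x ++ [(2 : Fin 3)] := by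
          rw [range_map_succ, hy]
        rw [hv, ctx_one_aux ε c hc _ (by simpa using hn)]
        simp
    · refine measure_mono_null ?_ (MeasureTheory.measure_empty (μ := μ))
      rintro ω ⟨⟨-, h2⟩, hC⟩
      exact absurd ((hC n (by omega)).symm.trans h2) hy
  -- Part 2
  have h2 : μ ({ω | X (n+2) ω = 2} ∩ {ω | X n ω = 2}) = 0 := by
    rw [cylDecomp μ X hX _ ((hmeasX (n+2)).inter (hmeasX n)) (n+2)]
    apply Finset.sum_eq_zero
    intro y _
    set x : ℕ → Fin 3 := extF (n+2) y with hxdef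
    by_cases hy : x n = 2
    · have hsub : {ω | ∀ i < n+2, X i ω = x i} ⊆ {ω | X n ω = 2} := by
        intro ω hω
        exact (hω n (by omega)).trans hy
      have heq : ({ω | X (n+2) ω = 2} ∩ {ω | X n ω = 2}) ∩ {ω | ∀ i < n+2, X i ω = x i}
          = {ω | X (n+2) ω = 2} ∩ {ω | ∀ i < n+2, X i ω = x i} := by
        ext ω
        constructor
        · rintro ⟨⟨h1', -⟩, h2'⟩; exact ⟨h1', h2'⟩
        · rintro ⟨h1', h2'⟩; exact ⟨⟨h1', hsub h2'⟩, h2'⟩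
      rw [heq]
      rcases eq_or_ne (μ {ω | ∀ i < n+2, X i ω = x i}) 0 with h0 | h0
      · exact measure_mono_null Set.inter_subset_right h0
      · rw [hcompat (n+2) (by omega) x (pos_iff_ne_zero.mpr h0) 2]
        rw [range_map_succ2, ctx_two_aux ε c hc]
        rw [if_pos (Or.inl hy)]
        simp
    · refine measure_mono_null ?_ (MeasureTheory.measure_empty (μ := μ))
      rintro ω ⟨⟨-, h2'⟩, hC⟩
      exact absurd ((hC n (by omega)).symm.trans h2') hy
  -- Part 3
  have h3 : μ ({ω | X (n+3) ω = 2} ∩ {ω | X n ω = 2}) = μ {ω | X n ω = 2} := by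
    rw [cylDecomp μ X hX _ ((hmeasX (n+3)).inter (hmeasX n)) (n+3),
        cylDecomp μ X hX _ (hmeasX n) (n+3)]
    apply Finset.sum_congr rfl
    intro y _
    set x : ℕ → Fin 3 := extF (n+3) y with hxdef
    by_cases hy : x n = 2
    · have hsub : {ω | ∀ i < n+3, X i ω = x i} ⊆ {ω | X n ω = 2} := by
        intro ω hω
        exact (hω n (by omega)).trans hy
      have heqL : ({ω | X (n+3) ω = 2} ∩ {ω | X n ω = 2}) ∩ {ω | ∀ i < n+3, X i ω = x i}
          = {ω | X (n+3) ω = 2} ∩ {ω | ∀ i < n+3, X i ω = x i} := by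
        ext ω
        constructor
        · rintro ⟨⟨ha, -⟩, hb⟩; exact ⟨ha, hb⟩
        · rintro ⟨ha, hb⟩; exact ⟨⟨ha, hsub hb⟩, hb⟩
      have heqR : {ω | X n ω = 2} ∩ {ω | ∀ i < n+3, X i ω = x i}
          = {ω | ∀ i < n+3, X i ω = x i} := by
        apply Set.inter_eq_self_of_subset_right hsub
      rw [heqL, heqR]
      rcases eq_or_ne (μ {ω | ∀ i < n+3, X i ω = x i}) 0 with h0 | h0
      · rw [h0]
        exact measure_mono_null Set.inter_subset_right h0
      · have hy1 : x (n+1) ≠ 2 := by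
          intro hc1
          apply h0
          refine measure_mono_null ?_ h1
          intro ω hω
          exact ⟨(hω (n+1) (by omega)).trans hc1, (hω n (by omega)).trans hy⟩
        have hy2 : x (n+2) ≠ 2 := by
          intro hc2
          apply h0
          refine measure_mono_null ?_ h2
          intro ω hω
          exact ⟨(hω (n+2) (by omega)).trans hc2, (hω n (by omega)).trans hy⟩
        rw [hcompat (n+3) (by omega) x (pos_iff_ne_zero.mpr h0) 2]
        have hv : (List.range (n+3)).map x
            = (List.range (n+1)).map x ++ [x (n+1), x (n+2)] := by
          have := range_map_succ2 x (n+1)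
          simpa [Nat.add_assoc] using this
        rw [hv, ctx_two_aux ε c hc]
        rw [if_neg (by tauto)]
        simp
    · have heqL : ({ω | X (n+3) ω = 2} ∩ {ω | X n ω = 2}) ∩ {ω | ∀ i < n+3, X i ω = x i}
          = ∅ := by
        ext ω
        simp only [Set.mem_inter_iff, Set.mem_setOf_eq, Set.mem_empty_iff_false, iff_false]
        rintro ⟨⟨-, hb⟩, hC⟩
        exact absurd ((hC n (by omega)).symm.trans hb) hy
      have heqR : {ω | X n ω = 2} ∩ {ω | ∀ i < n+3, X i ω = x i} = ∅ := by
        ext ω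
        simp only [Set.mem_inter_iff, Set.mem_setOf_eq, Set.mem_empty_iff_false, iff_false]
        rintro ⟨hb, hC⟩
        exact absurd ((hC n (by omega)).symm.trans hb) hy
      rw [heqL, heqR]
  exact ⟨h1, h2, h3⟩
end

section
/- Let (Ω, F, P) be a probability space, G a sub-σ-algebra of F, N ≥ 1 an integer and α ∈ [0,1]. For each n ∈ ℕ, let Z_{1,n}, …, Z_{N,n} be {0,1}-valued random variables which are conditionally independent given G, and suppose that for each 1 ≤ i ≤ N, P(Z_{i,n} = 1 | G) → α almost surely as n → ∞. Then for all a_1, …, a_N ∈ {0,1}, lim_{n→∞} P(Z_{1,n} = a_1, …, Z_{N,n} = a_N) = α^{Σ_{i=1}^N a_i} (1−α)^{N − Σ_{i=1}^N a_i}. -/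
open MeasureTheory Filter

/-- let G be a sub-σ-algebra of F, N ≥ 1 and α ∈ [0,1]. For each n let
Z_{1,n}, …, Z_{N,n} be {0,1}-valued random variables, conditionally independent given
G, with P(Z_{i,n} = 1 | G) → α a.s. as n → ∞ for each i. Then for all
a_1, …, a_N ∈ {0,1},
lim_n P(Z_{1,n} = a_1, …, Z_{N,n} = a_N) = α^{Σ a_i} (1−α)^{N − Σ a_i}. -/
theorem stmt9 {Ω : Type*} (G : MeasurableSpace Ω) [m : MeasurableSpace Ω] (μ : Measure Ω)
    [IsProbabilityMeasure μ]
    (hG : G ≤ m)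
    (N : ℕ) (hN : 1 ≤ N) (α : ℝ) (hα0 : 0 ≤ α) (hα1 : α ≤ 1)
    (Z : ℕ → Fin N → Ω → ℕ)
    (hZmeas : ∀ n i, Measurable (Z n i))
    (hZ01 : ∀ n i ω, Z n i ω = 0 ∨ Z n i ω = 1)
    (hcondindep : ∀ (n : ℕ) (B : Fin N → Set ℕ),
      (μ[Set.indicator {ω | ∀ i, Z n i ω ∈ B i} (fun _ => (1 : ℝ)) | G]) =ᵐ[μ]
        fun ω => ∏ i, (μ[Set.indicator {ω' | Z n i ω' ∈ B i} (fun _ => (1 : ℝ)) | G]) ω)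
    (hconv : ∀ i : Fin N, ∀ᵐ ω ∂μ,
      Tendsto (fun n : ℕ =>
          (μ[Set.indicator {ω' | Z n i ω' = 1} (fun _ => (1 : ℝ)) | G]) ω)
        atTop (nhds α))
    (a : Fin N → ℕ) (ha : ∀ i, a i = 0 ∨ a i = 1) :
    Tendsto (fun n : ℕ => (μ {ω | ∀ i, Z n i ω = a i}).toReal) atTop
      (nhds (α ^ (∑ i, a i) * (1 - α) ^ (N - ∑ i, a i))) := by
  classical
  letI : MeasurableSpace Ω := m
  -- abbreviations
  set g : ℕ → Fin N → Ω → ℝ :=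
    fun n i => μ[Set.indicator {ω' | Z n i ω' = 1} (fun _ => (1 : ℝ)) | G] with hg
  set h : ℕ → Fin N → Ω → ℝ :=
    fun n i => μ[Set.indicator {ω' | Z n i ω' = a i} (fun _ => (1 : ℝ)) | G] with hh
  -- measurability and integrability of indicators
  have hms : ∀ n i (c : ℕ), MeasurableSet[m] {ω' | Z n i ω' = c} := by
    intro n i c
    exact (hZmeas n i) (measurableSet_singleton c)
  have hint : ∀ n i (c : ℕ),
      Integrable (Set.indicator {ω' | Z n i ω' = c} (fun _ => (1 : ℝ))) μ :=
    fun n i c => (integrable_const (1 : ℝ)).indicator (hms n i c)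
  -- bounds on g
  have hg0 : ∀ n i, 0 ≤ᵐ[μ] g n i := by
    intro n i
    exact condExp_nonneg (Filter.Eventually.of_forall fun ω =>
      Set.indicator_nonneg (fun _ _ => zero_le_one) ω)
  have hg1 : ∀ n i, g n i ≤ᵐ[μ] fun _ => (1 : ℝ) := by
    intro n i
    have := condExp_mono (μ := μ) (m := G) (hint n i 1) (integrable_const (1 : ℝ))
      (Filter.Eventually.of_forall fun ω =>
        Set.indicator_le_self' (fun _ _ => zero_le_one) ω)
    calc g n i ≤ᵐ[μ] μ[(fun _ => (1:ℝ)) | G] := this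
    _ = fun _ => (1 : ℝ) := condExp_const hG 1
  -- h in terms of g
  have hhg : ∀ n i, h n i =ᵐ[μ]
      fun ω => if a i = 1 then g n i ω else 1 - g n i ω := by
    intro n i
    rcases ha i with h0 | h1
    · have hnot : ¬ (a i = 1) := by omega
      simp only [hnot, if_false]
      have hset : Set.indicator {ω' | Z n i ω' = a i} (fun _ => (1 : ℝ)) =
          (fun _ => (1:ℝ)) - Set.indicator {ω' | Z n i ω' = 1} (fun _ => (1 : ℝ)) := by
        funext ω
        rcases hZ01 n i ω with hz | hz <;>
          simp [Set.indicator_apply, Set.mem_setOf_eq, hz, h0]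
      calc h n i = μ[(fun _ => (1:ℝ)) - Set.indicator {ω' | Z n i ω' = 1}
            (fun _ => (1 : ℝ)) | G] := by simp only [hh]; rw [hset]
      _ =ᵐ[μ] μ[(fun _ => (1:ℝ)) | G] - μ[Set.indicator {ω' | Z n i ω' = 1}
            (fun _ => (1 : ℝ)) | G] := condExp_sub (integrable_const 1) (hint n i 1) G
      _ = fun ω => 1 - g n i ω := by rw [condExp_const hG]; rfl
    · simp only [h1, if_true, hh, hg]
      exact Filter.EventuallyEq.rfl
  -- Step A: the probability equals the integral of the product
  have hA : ∀ n, (μ {ω | ∀ i, Z n i ω = a i}).toReal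
      = ∫ ω, ∏ i, h n i ω ∂μ := by
    intro n
    have hmsA : MeasurableSet[m] {ω | ∀ i, Z n i ω = a i} := by
      have : {ω | ∀ i, Z n i ω = a i} = ⋂ i, {ω | Z n i ω = a i} := by
        ext ω; simp [Set.mem_iInter]
      rw [this]
      exact MeasurableSet.iInter fun i => hms n i (a i)
    have h1 : (μ {ω | ∀ i, Z n i ω = a i}).toReal
        = ∫ ω, Set.indicator {ω | ∀ i, Z n i ω = a i} (1 : Ω → ℝ) ω ∂μ :=
      (MeasureTheory.integral_indicator_one (μ := μ) hmsA).symm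
    have h2 : ∫ ω, Set.indicator {ω | ∀ i, Z n i ω = a i} (1 : Ω → ℝ) ω ∂μ
        = ∫ ω, (μ[Set.indicator {ω | ∀ i, Z n i ω = a i} (fun _ => (1:ℝ)) | G]) ω ∂μ :=
      (integral_condExp hG).symm
    have h3 := hcondindep n (fun i => {a i})
    have hsets : {ω | ∀ i, Z n i ω ∈ ({a i} : Set ℕ)} = {ω | ∀ i, Z n i ω = a i} := by
      ext ω; simp
    have hsets2 : ∀ i, {ω' | Z n i ω' ∈ ({a i} : Set ℕ)} = {ω' | Z n i ω' = a i} := by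
      intro i; ext ω; simp
    rw [hsets] at h3
    simp only [hsets2] at h3
    rw [h1, h2, integral_congr_ae h3]
  simp only [hA]
  -- pointwise a.e. limit
  set c : Fin N → ℝ := fun i => if a i = 1 then α else 1 - α with hc
  have hlim : ∀ᵐ ω ∂μ, Tendsto (fun n => ∏ i, h n i ω) atTop (nhds (∏ i, c i)) := by
    have hall : ∀ᵐ ω ∂μ, (∀ i, Tendsto (fun n => g n i ω) atTop (nhds α)) ∧
        (∀ n i, h n i ω = if a i = 1 then g n i ω else 1 - g n i ω) := by
      refine ((ae_all_iff.2 hconv).and ?_)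
      rw [ae_all_iff]
      intro n
      rw [ae_all_iff]
      intro i
      exact hhg n i
    filter_upwards [hall] with ω hω
    rcases hω with ⟨hωconv, hωeq⟩
    have : ∀ i : Fin N, Tendsto (fun n => h n i ω) atTop (nhds (c i)) := by
      intro i
      simp only [hωeq]
      by_cases hi : a i = 1
      · simpa [hc, hi] using hωconv i
      · simpa [hc, hi] using (tendsto_const_nhds.sub (hωconv i))
    exact tendsto_finset_prod _ fun i _ => this i
  -- dominated convergence
  have hbound : ∀ n, ∀ᵐ ω ∂μ, ‖∏ i, h n i ω‖ ≤ (1 : ℝ) := by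
    intro n
    have : ∀ᵐ ω ∂μ, ∀ i : Fin N, 0 ≤ h n i ω ∧ h n i ω ≤ 1 := by
      rw [ae_all_iff]
      intro i
      filter_upwards [hg0 n i, hg1 n i, hhg n i] with ω h0 h1 heq
      rw [heq]
      by_cases hi : a i = 1 <;> simp [hi] at h0 h1 ⊢ <;> constructor <;> linarith
    filter_upwards [this] with ω hω
    rw [Real.norm_eq_abs, abs_of_nonneg (Finset.prod_nonneg fun i _ => (hω i).1)]
    calc ∏ i, h n i ω ≤ ∏ i : Fin N, (1 : ℝ) :=
          Finset.prod_le_prod (fun i _ => (hω i).1) (fun i _ => (hω i).2)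
    _ = 1 := by simp
  have hmeas : ∀ n, AEStronglyMeasurable (fun ω => ∏ i, h n i ω) μ := by
    intro n
    exact (Finset.aestronglyMeasurable_fun_prod _ fun i _ =>
      (stronglyMeasurable_condExp.mono hG).aestronglyMeasurable)
  have hdom := tendsto_integral_of_dominated_convergence (fun _ => (1 : ℝ))
      hmeas (integrable_const 1) hbound hlim
  rw [integral_const] at hdom
  simp only [probReal_univ, one_smul] at hdom
  -- identify the limit
  have hprod : ∏ i, c i = α ^ (∑ i, a i) * (1 - α) ^ (N - ∑ i, a i) := by
    rw [hc]
    rw [Finset.prod_ite]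
    rw [Finset.prod_const, Finset.prod_const]
    have hsum : ∑ i, a i = (Finset.univ.filter (fun i => a i = 1)).card := by
      rw [Finset.card_filter]
      apply Finset.sum_congr rfl
      intro i _
      rcases ha i with ha' | ha' <;> simp [ha']
    have hcard : (Finset.univ.filter (fun i => ¬ a i = 1)).card
        = N - (Finset.univ.filter (fun i => a i = 1)).card := by
      have := Finset.card_filter_add_card_filter_not
        (s := (Finset.univ : Finset (Fin N))) (p := fun i => a i = 1)
      simp only [Finset.card_univ, Fintype.card_fin] at this
      omega
    rw [hsum, hcard]
  rw [← hprod]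
  exact hdom
end

section
/- Let ε ∈ [0,1] and let (X_n)_{n≥0} be a stochastic process with values in A = {0,1,2} compatible with (τ_ter, p_ter). Then almost surely (1/n)·|{1 ≤ m ≤ n : X_m = 2}| → 1/3 as n → ∞; that is, the asymptotic frequency of the symbol 2 in the Ternary chain equals 1/3. -/
open MeasureTheory

lemma suffix_pair {α : Type*} {l : List α} {p q a b : α} (h : [p,q] <:+ l ++ [a,b]) :
    p = a ∧ q = b := by
  obtain ⟨t, ht⟩ := h
  have h2 : (t ++ [p]) ++ [q] = (l ++ [a]) ++ [b] := by
    rw [List.append_assoc, List.append_assoc]; exact ht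
  obtain ⟨h4, h5⟩ := List.append_inj' h2 rfl
  obtain ⟨-, h6⟩ := List.append_inj' h4 rfl
  exact ⟨by simpa using h6, by simpa using h5⟩

lemma suffix_single {α : Type*} {l : List α} {q a b : α} (h : [q] <:+ l ++ [a,b]) : q = b := by
  obtain ⟨t, ht⟩ := h
  have h2 : t ++ [q] = (l ++ [a]) ++ [b] := by
    rw [List.append_assoc]; exact ht
  obtain ⟨-, h5⟩ := List.append_inj' h2 rfl
  simpa using h5

lemma ctx_eq (c : List (Fin 3) → List (Fin 3))
    (hc : ∀ v : List (Fin 3), 2 ≤ v.length → c v ∈ tauTer ∧ c v <:+ v)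
    (w : List (Fin 3)) (a b : Fin 3) :
    c (w ++ [a, b]) = if b = 2 then [2] else [a, b] := by
  obtain ⟨hmem, hsuf⟩ := hc (w ++ [a,b]) (by simp)
  simp only [tauTer, Finset.mem_insert, Finset.mem_singleton] at hmem
  rcases hmem with h|h|h|h|h|h|h <;> rw [h] at hsuf ⊢ <;>
    first
      | (obtain ⟨ha, hb⟩ := suffix_pair hsuf; subst ha; subst hb; decide)
      | (have hb := suffix_single hsuf; subst hb; simp)

lemma pTer_ctx_two (ε : ℝ) (a0 a1 : Fin 3) (h : a1 = 2 ∨ a0 = 2) :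
    pTer ε (if a1 = 2 then [2] else [a0, a1]) 2 = 0 := by
  fin_cases a0 <;> fin_cases a1 <;> simp_all [pTer]

lemma pTer_ctx_ne (ε : ℝ) (a0 a1 : Fin 3) (h0 : a0 ≠ 2) (h1 : a1 ≠ 2) (a : Fin 3) (ha : a ≠ 2) :
    pTer ε [a0, a1] a = 0 := by
  fin_cases a0 <;> fin_cases a1 <;> fin_cases a <;> simp_all [pTer]


lemma comb (f : ℕ → Fin 3) (h : ∀ n, (f (n+2) = 2 ↔ (f (n+1) ≠ 2 ∧ f n ≠ 2))) :
    Filter.Tendsto (fun n : ℕ => (((Finset.Icc 1 n).filter (fun m => f m = 2)).card : ℝ) / n)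
      Filter.atTop (nhds (1/3)) := by
  classical
  have stepE : ∀ m a1 a2 a3 : ℕ, a1 = m + 3 → a2 = m + 4 → a3 = m + 5 →
      f (m + 2) = 2 → f a1 ≠ 2 ∧ f a2 ≠ 2 ∧ f a3 = 2 := by
    rintro m _ _ _ rfl rfl rfl h2
    have h3 : f (m+3) = 2 ↔ f (m+2) ≠ 2 ∧ f (m+1) ≠ 2 := h (m+1)
    have h4 : f (m+4) = 2 ↔ f (m+3) ≠ 2 ∧ f (m+2) ≠ 2 := h (m+2)
    have h5 : f (m+5) = 2 ↔ f (m+4) ≠ 2 ∧ f (m+3) ≠ 2 := h (m+3)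
    have t1 : f (m+3) ≠ 2 := fun hh => (h3.1 hh).1 h2
    have t2 : f (m+4) ≠ 2 := fun hh => (h4.1 hh).2 h2
    exact ⟨t1, t2, h5.2 ⟨t2, t1⟩⟩
  have hex : ∃ s, f (s + 2) = 2 := by
    by_cases h2 : f 2 = 2
    · exact ⟨0, h2⟩
    by_cases h3 : f 3 = 2
    · exact ⟨1, h3⟩
    exact ⟨2, (h 2).2 ⟨h3, h2⟩⟩
  obtain ⟨s, hs⟩ := hex
  have ind : ∀ k, f (s + 2 + 3*k) = 2 ∧ f (s + 2 + 3*k + 1) ≠ 2 ∧ f (s + 2 + 3*k + 2) ≠ 2 := by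
    intro k; induction k with
    | zero =>
      have hA := stepE s (s+3) (s+4) (s+5) rfl rfl rfl hs
      refine ⟨?_, ?_, ?_⟩
      · rw [(by ring : s + 2 + 3*0 = s + 2)]; exact hs
      · rw [(by ring : s + 2 + 3*0 + 1 = s + 3)]; exact hA.1
      · rw [(by ring : s + 2 + 3*0 + 2 = s + 4)]; exact hA.2.1
    | succ k ih =>
      have hA := stepE (s + 3*k) (s + 3*k + 3) (s + 3*k + 4) (s + 3*k + 5) rfl rfl rfl
        (by rw [(by ring : s + 3*k + 2 = s + 2 + 3*k)]; exact ih.1)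
      have hB := stepE (s + 3*k + 3) (s + 3*k + 6) (s + 3*k + 7) (s + 3*k + 8) rfl rfl rfl hA.2.2
      refine ⟨?_, ?_, ?_⟩
      · rw [(by ring : s + 2 + 3*(k+1) = s + 3*k + 5)]; exact hA.2.2
      · rw [(by ring : s + 2 + 3*(k+1) + 1 = s + 3*k + 6)]; exact hB.1
      · rw [(by ring : s + 2 + 3*(k+1) + 2 = s + 3*k + 7)]; exact hB.2.1
  have charac : ∀ m, s + 2 ≤ m → (f m = 2 ↔ (m - (s+2)) % 3 = 0) := by
    intro m hm
    rcases (by omega : (m - (s+2)) % 3 = 0 ∨ (m - (s+2)) % 3 = 1 ∨ (m - (s+2)) % 3 = 2) with hj | hj | hj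
    · exact iff_of_true (by rw [(by omega : m = s + 2 + 3*((m - (s+2))/3))]; exact (ind _).1) hj
    · exact iff_of_false (by rw [(by omega : m = s + 2 + 3*((m - (s+2))/3) + 1)]; exact (ind _).2.1) (by omega)
    · exact iff_of_false (by rw [(by omega : m = s + 2 + 3*((m - (s+2))/3) + 2)]; exact (ind _).2.2) (by omega)
  set r := s + 2 with hr
  set Cc := ((Finset.Icc 1 r).filter (fun m => f m = 2)).card with hCc
  have count : ∀ n, r ≤ n → ((Finset.Icc 1 n).filter (fun m => f m = 2)).card = Cc + (n - r)/3 := by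
    intro n hn
    induction n, hn using Nat.le_induction with
    | base => simp [hCc]
    | succ n hn ih =>
      rw [← Finset.insert_Icc_right_eq_Icc_add_one (by omega : 1 ≤ n + 1), Finset.filter_insert]
      by_cases hc2 : f (n+1) = 2
      · rw [if_pos hc2, Finset.card_insert_of_notMem (by simp), ih]
        have := (charac (n+1) (by omega)).1 hc2
        omega
      · rw [if_neg hc2, ih]
        have := mt (charac (n+1) (by omega)).2 hc2
        omega
  rw [tendsto_iff_dist_tendsto_zero]
  apply squeeze_zero' (g := fun n : ℕ => ((Cc : ℝ) + r + 1)/n)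
  · exact Filter.Eventually.of_forall fun n => dist_nonneg
  · refine Filter.eventually_atTop.2 ⟨max r 1, fun n hn => ?_⟩
    have hrn : r ≤ n := le_trans (le_max_left _ _) hn
    have hn1 : 1 ≤ n := le_trans (le_max_right _ _) hn
    have hn0 : (0:ℝ) < n := by exact_mod_cast Nat.lt_of_lt_of_le Nat.zero_lt_one hn1
    have hne : (n:ℝ) ≠ 0 := hn0.ne'
    rw [Real.dist_eq, count n hrn]
    set q := (n - r)/3 with hq
    have hb : 3*q ≤ n - r ∧ n - r ≤ 3*q + 2 := by omega
    have c1 : (3*(q:ℝ)) ≤ (n:ℝ) - r := by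
      have h' := (Nat.cast_le (α := ℝ)).2 hb.1
      rw [Nat.cast_sub hrn] at h'; push_cast [hr] at h' ⊢; linarith
    have c2 : (n:ℝ) - r ≤ 3*q + 2 := by
      have h' := (Nat.cast_le (α := ℝ)).2 hb.2
      rw [Nat.cast_sub hrn] at h'; push_cast [hr] at h' ⊢; linarith
    have e : ((Cc + q : ℕ) : ℝ)/n - 1/3 = (3*(Cc:ℝ) + 3*q - n)/(3*n) := by
      push_cast; field_simp
    rw [e, abs_div, abs_of_pos (by linarith : (0:ℝ) < 3*n)]
    calc |3*(Cc:ℝ) + 3*q - n| / (3*n) ≤ (3*((Cc:ℝ) + r + 1)) / (3*n) := by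
          gcongr
          rw [abs_le]
          have : (0:ℝ) ≤ (Cc:ℝ) := Nat.cast_nonneg _
          have : (0:ℝ) ≤ (r:ℝ) := Nat.cast_nonneg _
          constructor <;> linarith
      _ = ((Cc:ℝ) + r + 1) / n := mul_div_mul_left _ _ (by norm_num)
  · exact tendsto_const_div_atTop_nhds_zero_nat _

def extFun (N : ℕ) (x : Fin N → Fin 3) (i : ℕ) : Fin 3 := if h : i < N then x ⟨i, h⟩ else 0

/-- for ε ∈ [0,1] and (X_n) compatible with (τ_ter, p_ter), almost
surely (1/n)·|{1 ≤ m ≤ n : X_m = 2}| → 1/3 as n → ∞. -/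
theorem stmt13 {Ω : Type*} [MeasurableSpace Ω] (μ : Measure Ω) [IsProbabilityMeasure μ]
    (X : ℕ → Ω → Fin 3) (hX : ∀ n, Measurable (X n))
    (ε : ℝ) (hε0 : 0 ≤ ε) (hε1 : ε ≤ 1)
    (c : List (Fin 3) → List (Fin 3))
    (hc : ∀ v : List (Fin 3), 2 ≤ v.length → c v ∈ tauTer ∧ c v <:+ v)
    (hcompat : CompatibleTer μ X ε c) :
    ∀ᵐ ω ∂μ, Filter.Tendsto
      (fun n : ℕ => (((Finset.Icc 1 n).filter (fun m => X m ω = 2)).card : ℝ) / n)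
      Filter.atTop (nhds (1/3)) := by
  classical
  have hbad : ∀ n : ℕ, μ {ω | ¬ (X (n+2) ω = 2 ↔ (X (n+1) ω ≠ 2 ∧ X n ω ≠ 2))} = 0 := by
    intro n
    have hcover : {ω | ¬ (X (n+2) ω = 2 ↔ (X (n+1) ω ≠ 2 ∧ X n ω ≠ 2))} ⊆
        ⋃ x : Fin (n+2) → Fin 3,
          ({ω | ∀ i < n+2, X i ω = extFun (n+2) x i} ∩
            {ω | ¬ (X (n+2) ω = 2 ↔ (X (n+1) ω ≠ 2 ∧ X n ω ≠ 2))}) := by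
      intro ω hω
      refine Set.mem_iUnion.2 ⟨fun i => X i.1 ω, ⟨fun i hi => ?_, hω⟩⟩
      simp [extFun, hi]
    refine measure_mono_null hcover (measure_iUnion_null fun x => ?_)
    by_cases hpos : μ {ω | ∀ i < n+2, X i ω = extFun (n+2) x i} = 0
    · exact measure_mono_null Set.inter_subset_left hpos
    have hpos' : 0 < μ {ω | ∀ i < n+2, X i ω = extFun (n+2) x i} :=
      lt_of_le_of_ne (zero_le) (Ne.symm hpos)
    have hcomp := hcompat (n+2) (by omega) (extFun (n+2) x) hpos'
    have hv : (List.range (n+2)).map (extFun (n+2) x) =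
        ((List.range n).map (extFun (n+2) x)) ++ [extFun (n+2) x n, extFun (n+2) x (n+1)] := by
      simp [List.range_succ]
    have hctx : c ((List.range (n+2)).map (extFun (n+2) x)) =
        if extFun (n+2) x (n+1) = 2 then [2] else [extFun (n+2) x n, extFun (n+2) x (n+1)] := by
      rw [hv]; exact ctx_eq c hc _ _ _
    by_cases hcase : extFun (n+2) x (n+1) ≠ 2 ∧ extFun (n+2) x n ≠ 2
    · have hz : ∀ a : Fin 3, a ≠ 2 →
          μ ({ω | X (n+2) ω = a} ∩ {ω | ∀ i < n+2, X i ω = extFun (n+2) x i}) = 0 := by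
        intro a ha
        rw [hcomp a, hctx, if_neg hcase.1, pTer_ctx_ne ε _ _ hcase.2 hcase.1 a ha]
        simp
      refine measure_mono_null ?_ (measure_union_null (hz 0 (by decide)) (hz 1 (by decide)))
      rintro ω ⟨hC, hB⟩
      have e0 : X n ω = extFun (n+2) x n := hC n (by omega)
      have e1 : X (n+1) ω = extFun (n+2) x (n+1) := hC (n+1) (by omega)
      have hXne : X (n+2) ω ≠ 2 := by
        intro h2
        exact hB (iff_of_true h2 ⟨by rw [e1]; exact hcase.1, by rw [e0]; exact hcase.2⟩)
      have h01 : ∀ y : Fin 3, y ≠ 2 → y = 0 ∨ y = 1 := by decide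
      rcases h01 _ hXne with h|h
      · exact Or.inl ⟨h, hC⟩
      · exact Or.inr ⟨h, hC⟩
    · have hor : extFun (n+2) x (n+1) = 2 ∨ extFun (n+2) x n = 2 := by tauto
      have hz : μ ({ω | X (n+2) ω = 2} ∩ {ω | ∀ i < n+2, X i ω = extFun (n+2) x i}) = 0 := by
        rw [hcomp 2, hctx, pTer_ctx_two ε _ _ hor]
        simp
      refine measure_mono_null ?_ hz
      rintro ω ⟨hC, hB⟩
      refine ⟨?_, hC⟩
      have e0 : X n ω = extFun (n+2) x n := hC n (by omega)
      have e1 : X (n+1) ω = extFun (n+2) x (n+1) := hC (n+1) (by omega)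
      by_contra hne
      refine hB (iff_of_false hne ?_)
      rintro ⟨k1, k0⟩
      rcases hor with h|h
      · exact k1 (by rw [e1, h])
      · exact k0 (by rw [e0, h])
  have hae : ∀ᵐ ω ∂μ, ∀ n, (X (n+2) ω = 2 ↔ (X (n+1) ω ≠ 2 ∧ X n ω ≠ 2)) := by
    rw [MeasureTheory.ae_iff]
    refine measure_mono_null (fun ω hω => ?_) (measure_iUnion_null hbad)
    obtain ⟨n, hn⟩ := not_forall.1 hω
    exact Set.mem_iUnion.2 ⟨n, hn⟩
  filter_upwards [hae] with ω hω
  exact comb (fun n => X n ω) hω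
end
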